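/- For λ ∈ ℝ, r a nonnegative integer, and every nonnegative integer n, the extended degenerate Bell number satisfies Bel^{(r)}_{n,λ} = Σ_{k=0}^{n} S_{2,r}(n+r, k+r | λ) = Σ_{k=0}^{n} Σ_{m=k}^{n} Σ_{l=0}^{n−m} C(n,m) r^l λ^{n−m−l} S_1(n−m, l) S_{2,λ}(m, k). -/

import Mathlib

/-!
The factor `e^{(1+λt)^{1/λ} - 1} = Σ_k ((1+λt)^{1/λ} - 1)^k / k!` contributes to the coefficient
of `t^n` only through `k ≤ n`, since `(1+λt)^{1/λ} - 1` has no constant term; term by term this is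
the first identity. For the second, the coefficient of `t^n` in
`(1+λt)^{r/λ} · ((1+λt)^{1/λ} - 1)^k / k!` is the binomial convolution
`Σ_m C(n,m) (r|λ)_{n-m} S_{2,λ}(m,k)`, and `(x|λ)_j = Σ_l S_1(j,l) x^l λ^{j-l}` because `(x|λ)_j` is
the falling factorial `(x)_j` with its roots scaled by `λ`.
-/

open Finset

/-- The degenerate falling factorial `(x|λ)_n = x(x-λ)(x-2λ)⋯(x-(n-1)λ)`. -/
noncomputable def degFall (x lam : ℝ) (n : ℕ) : ℝ := ∏ i ∈ Finset.range n, (x - i * lam)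

/-- The formal power series `(1+λt)^{y/λ} = Σ_{m=0}^∞ (y|λ)_m t^m/m!`. -/
noncomputable def degExp (lam y : ℝ) : PowerSeries ℝ :=
  PowerSeries.mk fun m => degFall y lam m / m.factorial

/-- The degenerate Stirling numbers of the second kind `S_{2,λ}(n,k)`, defined by
`(1/k!)((1+λt)^{1/λ} - 1)^k = Σ_{n=k}^∞ S_{2,λ}(n,k) t^n/n!`. -/
noncomputable def degStirling2 (lam : ℝ) (n k : ℕ) : ℝ :=
  (n.factorial : ℝ) *
    PowerSeries.coeff n (((k.factorial : ℝ))⁻¹ • (degExp lam 1 - 1) ^ k)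

/-- The extended degenerate Stirling numbers of the second kind `S_{2,r}(n+r,k+r|λ)`,
defined by `(1/k!)(1+λt)^{r/λ}((1+λt)^{1/λ} - 1)^k = Σ_{n=k}^∞ S_{2,r}(n+r,k+r|λ) t^n/n!`. -/
noncomputable def extDegStirling2 (lam : ℝ) (r n k : ℕ) : ℝ :=
  (n.factorial : ℝ) *
    PowerSeries.coeff n
      (((k.factorial : ℝ))⁻¹ • (degExp lam r * (degExp lam 1 - 1) ^ k))

/-- The exponential `e^f = Σ_{k=0}^∞ f^k / k!` of a formal power series, computed
coefficientwise (the coefficientwise sums converge when `f` has zero constant term). -/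
noncomputable def expComp (f : PowerSeries ℝ) : PowerSeries ℝ :=
  PowerSeries.mk fun n => ∑' k : ℕ, PowerSeries.coeff n (f ^ k) / k.factorial

/-- The degenerate Bell polynomials, defined by
`e^{x((1+λt)^{1/λ} - 1)} = Σ_{n=0}^∞ Bel_{n,λ}(x) t^n/n!`. -/
noncomputable def degBell (lam x : ℝ) (n : ℕ) : ℝ :=
  (n.factorial : ℝ) * PowerSeries.coeff n (expComp (x • (degExp lam 1 - 1)))

/-- The extended degenerate Bell polynomials, defined by
`(1+λt)^{r/λ} e^{x((1+λt)^{1/λ} - 1)} = Σ_{n=0}^∞ Bel^{(r)}_{n,λ}(x) t^n/n!`. -/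
noncomputable def extDegBell (lam : ℝ) (r : ℕ) (x : ℝ) (n : ℕ) : ℝ :=
  (n.factorial : ℝ) *
    PowerSeries.coeff n (degExp lam r * expComp (x • (degExp lam 1 - 1)))

/-- The signed Stirling numbers of the first kind `S_1(n,k)`, defined by
`(x)_n = x(x-1)⋯(x-n+1) = Σ_{k=0}^n S_1(n,k) x^k`. -/
noncomputable def stirling1 (n k : ℕ) : ℝ :=
  (∏ i ∈ Finset.range n, (Polynomial.X - Polynomial.C (i : ℝ))).coeff k

/-- The Stirling numbers of the second kind, defined by
`(1/k!)(e^t - 1)^k = Σ_{n=k}^∞ S_2(n,k) t^n/n!`. -/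
noncomputable def stirling2 (n k : ℕ) : ℝ :=
  (n.factorial : ℝ) *
    PowerSeries.coeff n (((k.factorial : ℝ))⁻¹ • (PowerSeries.exp ℝ - 1) ^ k)

/-- The r-Stirling numbers of the second kind `S_{2,r}(n+r,k+r)`, defined by
`e^{rt}(1/k!)(e^t - 1)^k = Σ_{n=0}^∞ S_{2,r}(n+r,k+r) t^n/n!`. -/
noncomputable def rStirling2 (r n k : ℕ) : ℝ :=
  (n.factorial : ℝ) *
    PowerSeries.coeff n
      (PowerSeries.rescale (r : ℝ) (PowerSeries.exp ℝ) *
        ((k.factorial : ℝ))⁻¹ • (PowerSeries.exp ℝ - 1) ^ k)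

/-- The ordinary falling factorial `(x)_k = x(x-1)⋯(x-k+1)`. -/
noncomputable def fallFact (x : ℝ) (k : ℕ) : ℝ := ∏ i ∈ Finset.range k, (x - i)

open scoped Nat

namespace Polynomial

variable {R : Type*} [CommRing R]

lemma scaleRoots_X_sub_C [Nontrivial R] (a s : R) : (X - C a).scaleRoots s = X - C (a * s) := by
  ext (_ | _ | i) <;> simp [coeff_X, coeff_C, mul_comm]

lemma scaleRoots_prod_X_sub_C [IsDomain R] {ι : Type*} (t : Finset ι) (f : ι → R) (s : R) :
    (∏ i ∈ t, (X - C (f i))).scaleRoots s = ∏ i ∈ t, (X - C (f i * s)) := by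
  classical
  induction t using Finset.induction_on with
  | empty => simp
  | insert i t hi ih =>
    rw [prod_insert hi, prod_insert hi, mul_scaleRoots_of_noZeroDivisors, ih, scaleRoots_X_sub_C]

end Polynomial

open Polynomial in
lemma degFall_eq_sum_stirling1 (x lam : ℝ) (j : ℕ) :
    degFall x lam j = ∑ l ∈ range (j + 1), stirling1 j l * x ^ l * lam ^ (j - l) := by
  have hroots : degFall x lam j =
      ((∏ i ∈ range j, (X - C (i : ℝ))).scaleRoots lam).eval x := by
    rw [scaleRoots_prod_X_sub_C, eval_prod]
    simp [degFall]
  rw [hroots, eval_eq_sum_range, natDegree_scaleRoots, natDegree_finsetProd_X_sub_C_eq_card,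
    card_range]
  refine sum_congr rfl fun l _ => ?_
  rw [coeff_scaleRoots, natDegree_finsetProd_X_sub_C_eq_card, card_range, stirling1]
  ring

namespace PowerSeries

variable {R : Type*}

lemma coeff_pow_eq_zero_of_constantCoeff_eq_zero [Semiring R] {f : PowerSeries R}
    (hf : constantCoeff f = 0) {j k : ℕ} (h : j < k) : coeff j (f ^ k) = 0 :=
  coeff_of_lt_order j <| (Nat.cast_lt.mpr h).trans_le (le_order_pow_of_constantCoeff_eq_zero k hf)

lemma factorial_mul_coeff_mul [CommSemiring R] (p q : PowerSeries R) (n : ℕ) :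
    (n ! : R) * coeff n (p * q) =
      ∑ m ∈ range (n + 1), (n.choose m : R) * ((m ! : R) * coeff m p) *
        ((n - m)! * coeff (n - m) q) := by
  rw [coeff_mul, Nat.sum_antidiagonal_eq_sum_range_succ_mk, mul_sum]
  refine sum_congr rfl fun m hm => ?_
  have hchoose : (n.choose m : R) * m ! * (n - m)! = n ! := by
    rw [← Nat.cast_mul, ← Nat.cast_mul,
      Nat.choose_mul_factorial_mul_factorial (Nat.lt_succ_iff.mp (mem_range.mp hm))]
  rw [← hchoose]
  ring

end PowerSeries

open PowerSeries

lemma X_pow_dvd_expComp_sub_sum {f : PowerSeries ℝ} (hf : constantCoeff f = 0) (n : ℕ) :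
    X ^ (n + 1) ∣ expComp f - ∑ k ∈ range (n + 1), (k ! : ℝ)⁻¹ • f ^ k := by
  refine X_pow_dvd_iff.mpr fun m hm => ?_
  have hvanish : ∀ k ∉ range (n + 1), coeff m (f ^ k) / k ! = 0 := fun k hk => by
    rw [coeff_pow_eq_zero_of_constantCoeff_eq_zero hf (by simp at hk; omega), zero_div]
  rw [expComp, map_sub, coeff_mk, tsum_eq_sum hvanish, map_sum, sub_eq_zero]
  simp only [coeff_smul, smul_eq_mul, div_eq_inv_mul]

lemma coeff_mul_expComp (g : PowerSeries ℝ) {f : PowerSeries ℝ} (hf : constantCoeff f = 0)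
    (n : ℕ) :
    coeff n (g * expComp f) = ∑ k ∈ range (n + 1), coeff n ((k ! : ℝ)⁻¹ • (g * f ^ k)) := by
  obtain ⟨h, hh⟩ := X_pow_dvd_expComp_sub_sum hf n
  rw [sub_eq_iff_eq_add'] at hh
  rw [hh, mul_add, map_add, mul_left_comm, coeff_X_pow_mul', if_neg (by omega), add_zero,
    mul_sum, map_sum]
  simp only [mul_smul_comm]

lemma factorial_mul_coeff_degExp (lam y : ℝ) (m : ℕ) :
    (m ! : ℝ) * coeff m (degExp lam y) = degFall y lam m := by
  rw [degExp, coeff_mk]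
  field_simp

lemma constantCoeff_degExp_sub_one (lam : ℝ) : constantCoeff (degExp lam 1 - 1) = 0 := by
  simp [degExp, degFall, ← coeff_zero_eq_constantCoeff]

lemma degStirling2_eq_zero_of_lt (lam : ℝ) {m k : ℕ} (h : m < k) : degStirling2 lam m k = 0 := by
  rw [degStirling2, coeff_smul,
    coeff_pow_eq_zero_of_constantCoeff_eq_zero (constantCoeff_degExp_sub_one lam) h, smul_zero,
    mul_zero]

lemma extDegBell_eq_sum_extDegStirling2 (lam : ℝ) (r n : ℕ) :
    extDegBell lam r 1 n = ∑ k ∈ range (n + 1), extDegStirling2 lam r n k := by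
  rw [extDegBell, one_smul, coeff_mul_expComp _ (constantCoeff_degExp_sub_one lam), mul_sum]
  rfl

lemma extDegStirling2_eq_sum (lam : ℝ) (r n k : ℕ) :
    extDegStirling2 lam r n k =
      ∑ m ∈ range (n + 1), (n.choose m : ℝ) * degFall r lam (n - m) * degStirling2 lam m k := by
  rw [extDegStirling2, mul_comm (degExp lam r), ← smul_mul_assoc, factorial_mul_coeff_mul]
  refine sum_congr rfl fun m _ => ?_
  rw [factorial_mul_coeff_degExp, degStirling2]
  ring

theorem extDegBell_number_eq (lam : ℝ) (r : ℕ) (n : ℕ) :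
    extDegBell lam r 1 n = ∑ k ∈ Finset.range (n + 1), extDegStirling2 lam r n k ∧
    extDegBell lam r 1 n =
      ∑ k ∈ Finset.range (n + 1), ∑ m ∈ Finset.Icc k n, ∑ l ∈ Finset.range (n - m + 1),
        (n.choose m : ℝ) * (r : ℝ) ^ l * lam ^ (n - m - l) * stirling1 (n - m) l *
          degStirling2 lam m k := by
  refine ⟨extDegBell_eq_sum_extDegStirling2 lam r n,
    (extDegBell_eq_sum_extDegStirling2 lam r n).trans (sum_congr rfl fun k _ => ?_)⟩
  calc extDegStirling2 lam r n k
      = ∑ m ∈ range (n + 1), (n.choose m : ℝ) * degFall r lam (n - m) * degStirling2 lam m k :=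
        extDegStirling2_eq_sum lam r n k
    _ = ∑ m ∈ Icc k n, (n.choose m : ℝ) * degFall r lam (n - m) * degStirling2 lam m k := by
        refine (sum_subset (fun m hm => ?_) fun m _ hm => ?_).symm
        · simp only [mem_Icc, mem_range] at hm ⊢
          omega
        · rw [degStirling2_eq_zero_of_lt lam (by simp_all), mul_zero]
    _ = _ := by
        refine sum_congr rfl fun m _ => ?_
        rw [degFall_eq_sum_stirling1, mul_sum, sum_mul]
        exact sum_congr rfl fun l _ => by ring
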